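/- arXiv:2011.05690 — 3 statements merged into one kernel-verified Lean document; each statement's English description precedes it below -/
import Mathlib

section
/- Let A be a real n×n matrix and B a real n×m matrix. Suppose (W_k)_{k≥1} is a sequence of subspaces of ℝ^n and (C̃_k)_{k≥1} is a sequence of real n×n matrices such that: (i) W_1 equals the column span of B; (ii) for every k, the range (column space) of C̃_k is contained in W_k; and (iii) for every k, W_{k+1} is contained in the sum of W_k and the span of finitely many vectors q, each of which is an eigenvector with nonzero eigenvalue of the residual R_k = A C̃_k + C̃_k Aᵀ + B Bᵀ. Then for every k ≥ 1, W_k ⊆ 𝒦_k(A,B). (This is Proposition 2.1 of the paper, stating that the search spaces generated by the RAILS iteration with M = I and initial space orth(B) are contained in the block Krylov subspaces 𝒦_k(A,B).) -/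
open Matrix Submodule

/-!
Write `𝒦ₖ` for the block Krylov space. Since `𝒦₁` is the column span of `B`, `A 𝒦ₖ ⊆ 𝒦ₖ₊₁`
and `𝒦ₖ ⊆ 𝒦ₖ₊₁`, the range of a residual `A X + X D + B E` lies in `𝒦ₖ₊₁` as soon as the range
of `X` lies in `𝒦ₖ`. An eigenvector with nonzero eigenvalue lies in the range of its matrix, so
by induction every new direction added to `Wₖ` lies in `𝒦ₖ₊₁`.
-/

theorem LinearMap.mem_range_of_apply_eq_smul {K V : Type*} [DivisionRing K] [AddCommGroup V]
    [Module K V] {f : V →ₗ[K] V} {q : V} {lam : K} (hlam : lam ≠ 0) (hq : f q = lam • q) :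
    q ∈ LinearMap.range f :=
  ⟨lam⁻¹ • q, by rw [map_smul, hq, smul_smul, inv_mul_cancel₀ hlam, one_smul]⟩

namespace Matrix

variable {R ι κ : Type*} [CommRing R] [Fintype ι] [DecidableEq ι]
  (A : Matrix ι ι R) (B : Matrix ι κ R)

def blockKrylov (k : ℕ) : Submodule R (ι → R) :=
  span R (⋃ i ∈ Set.Iio k, Set.range (A ^ i * B)ᵀ)

theorem blockKrylov_mono : Monotone (blockKrylov A B) := fun _ _ hjk =>
  span_mono (Set.biUnion_subset_biUnion_left fun _ hi => lt_of_lt_of_le hi hjk)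

theorem range_mulVecLin_le_blockKrylov [Fintype κ] {k : ℕ} (hk : 1 ≤ k) :
    LinearMap.range B.mulVecLin ≤ blockKrylov A B k := by
  rw [range_mulVecLin]
  refine span_mono ?_
  rintro _ ⟨j, rfl⟩
  exact Set.mem_biUnion (Set.mem_Iio.2 hk) ⟨j, by simp [col]⟩

theorem mulVec_mem_blockKrylov_succ {k : ℕ} {x : ι → R} (hx : x ∈ blockKrylov A B k) :
    A *ᵥ x ∈ blockKrylov A B (k + 1) := by
  suffices blockKrylov A B k ≤ (blockKrylov A B (k + 1)).comap A.mulVecLin from this hx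
  refine span_le.2 ?_
  simp only [Set.iUnion_subset_iff, Set.mem_Iio]
  rintro i hi _ ⟨j, rfl⟩
  have hcol : A *ᵥ (A ^ i * B)ᵀ j = (A ^ (i + 1) * B)ᵀ j := by
    rw [pow_succ', Matrix.mul_assoc]; rfl
  simp only [SetLike.mem_coe, mem_comap, mulVecLin_apply, hcol]
  exact subset_span (Set.mem_biUnion (Nat.succ_lt_succ hi) ⟨j, rfl⟩)

theorem range_residual_le_blockKrylov_succ [Fintype κ] {k : ℕ} {X : Matrix ι ι R}
    (hX : LinearMap.range X.mulVecLin ≤ blockKrylov A B k) (D : Matrix ι ι R)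
    (E : Matrix κ ι R) :
    LinearMap.range (A * X + X * D + B * E).mulVecLin ≤ blockKrylov A B (k + 1) := by
  rintro _ ⟨x, rfl⟩
  simp only [mulVecLin_apply, add_mulVec, ← mulVec_mulVec]
  refine add_mem (add_mem ?_ ?_) ?_
  · exact mulVec_mem_blockKrylov_succ A B (hX ⟨x, rfl⟩)
  · exact blockKrylov_mono A B k.le_succ (hX ⟨D *ᵥ x, rfl⟩)
  · exact range_mulVecLin_le_blockKrylov A B k.succ_pos ⟨E *ᵥ x, rfl⟩

end Matrix

/-- Proposition 2.1 of the paper: with `M = I` and initial search space equal to the column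
span of `B`, the RAILS search spaces `W k` (expanded at each step by finitely many
eigenvectors, with nonzero eigenvalue, of the residual
`R k = A * C̃ k + C̃ k * Aᵀ + B * Bᵀ`) satisfy `W k ⊆ 𝒦_k(A, B)`,
the span of the columns of `B, A*B, …, A^(k-1)*B`. -/
theorem rails_search_space_subset_krylov
    {n m : ℕ} (A : Matrix (Fin n) (Fin n) ℝ) (B : Matrix (Fin n) (Fin m) ℝ)
    (W : ℕ → Submodule ℝ (Fin n → ℝ)) (C : ℕ → Matrix (Fin n) (Fin n) ℝ)
    (hW1 : W 1 = Submodule.span ℝ (Set.range Bᵀ))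
    (hrange : ∀ k, LinearMap.range (Matrix.mulVecLin (C k)) ≤ W k)
    (hexp : ∀ k, ∃ Q : Finset (Fin n → ℝ),
      (∀ q ∈ Q, ∃ lam : ℝ, lam ≠ 0 ∧
        (A * C k + C k * Aᵀ + B * Bᵀ).mulVec q = lam • q) ∧
      W (k + 1) ≤ W k ⊔ Submodule.span ℝ (Q : Set (Fin n → ℝ))) :
    ∀ k, 1 ≤ k →
      W k ≤ Submodule.span ℝ (⋃ i ∈ Set.Iio k, Set.range (A ^ i * B)ᵀ) := by
  intro k hk
  change W k ≤ blockKrylov A B k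
  induction k, hk using Nat.le_induction with
  | base =>
    rw [hW1]
    exact (range_mulVecLin B).ge.trans (range_mulVecLin_le_blockKrylov A B le_rfl)
  | succ k _ ih =>
    obtain ⟨Q, hQ, hW⟩ := hexp k
    have hres := range_residual_le_blockKrylov_succ A B ((hrange k).trans ih) Aᵀ Bᵀ
    refine hW.trans (sup_le (ih.trans (blockKrylov_mono A B k.le_succ)) (span_le.2 ?_))
    intro q hq
    obtain ⟨lam, hlam, heig⟩ := hQ q hq
    exact hres (LinearMap.mem_range_of_apply_eq_smul hlam heig)
end

section
/- Let A be a real n×n matrix and B a real n×m matrix whose m columns are linearly independent. Suppose (W_k)_{k≥1} is a sequence of subspaces of ℝ^n and (C̃_k)_{k≥1} is a sequence of real n×n matrices such that: (i) W_1 equals the column span of B (so dim W_1 = m); (ii) for every k, the range of C̃_k is contained in W_k; (iii) for every k, W_{k+1} is the sum of W_k and the span of m eigenvectors with nonzero eigenvalues of the residual R_k = A C̃_k + C̃_k Aᵀ + B Bᵀ; and (iv) for every k, dim W_{k+1} = dim W_k + m (i.e., the adjoined eigenvectors remain linearly independent after orthogonalization against W_k). Then for every k ≥ 1, W_k = 𝒦_k(A,B).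 (This is Remark 2.1 of the paper: when each expansion block Q_i has full rank, equality holds in Proposition 2.1.) -/
/-!
By induction on `k`, `W k ≤ 𝒦_k(A, B)`: an eigenvector `q` of the residual `R` with eigenvalue
`λ ≠ 0` equals `R (λ⁻¹ q)`, and `R` maps into `A 𝒦_k + 𝒦_k + range B ≤ 𝒦_{k+1}` as soon as
`range C̃_k ≤ W k = 𝒦_k`. Since `𝒦_{k+1} = 𝒦_k ⊔ range (A ^ k * B)` has dimension at most
`dim 𝒦_k + m = dim W (k + 1)`, the inclusion is an equality.
-/

open Matrix Submodule

namespace Matrix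

variable {R K ι κ : Type*} [CommRing R] [Field K] [Fintype ι]

theorem transpose_mul_apply (A : Matrix ι ι R) (M : Matrix ι κ R) (j : κ) :
    (A * M)ᵀ j = A *ᵥ Mᵀ j := by
  ext
  simp [mulVec, mul_apply, dotProduct]

theorem mem_range_mulVecLin_of_mulVec_eq_smul {M : Matrix ι ι K} {q : ι → K} {c : K}
    (hc : c ≠ 0) (hq : M *ᵥ q = c • q) : q ∈ LinearMap.range M.mulVecLin :=
  ⟨c⁻¹ • q, by rw [mulVecLin_apply, mulVec_smul, hq, smul_smul, inv_mul_cancel₀ hc, one_smul]⟩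

variable [DecidableEq ι]

def krylov (A : Matrix ι ι R) (B : Matrix ι κ R) (k : ℕ) : Submodule R (ι → R) :=
  span R (⋃ i ∈ Set.Iio k, Set.range (A ^ i * B)ᵀ)

section CommRing

variable (A : Matrix ι ι R) (B : Matrix ι κ R)

theorem krylov_succ (k : ℕ) :
    krylov A B (k + 1) = krylov A B k ⊔ span R (Set.range (A ^ k * B)ᵀ) := by
  simp only [krylov, Set.mem_Iio, Set.biUnion_lt_succ, span_union]

theorem krylov_mono : Monotone (krylov A B) :=
  fun _ _ hkl ↦ span_mono <| Set.biUnion_mono (fun _ hi ↦ lt_of_lt_of_le hi hkl) fun _ _ ↦ le_rfl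

theorem krylov_one : krylov A B 1 = span R (Set.range Bᵀ) := by
  simp [krylov]

theorem map_mulVecLin_krylov_le (k : ℕ) :
    (krylov A B k).map A.mulVecLin ≤ krylov A B (k + 1) := by
  rw [krylov, map_span, span_le]
  rintro _ ⟨_, hx, rfl⟩
  simp only [Set.mem_iUnion, Set.mem_Iio] at hx
  obtain ⟨i, hi, j, rfl⟩ := hx
  refine subset_span (Set.mem_biUnion (Set.mem_Iio.2 (Nat.succ_lt_succ hi)) ⟨j, ?_⟩)
  rw [mulVecLin_apply, pow_succ', Matrix.mul_assoc, transpose_mul_apply]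

theorem range_lyapunovResidual_le_krylov_succ [Fintype κ] {C : Matrix ι ι R} {k : ℕ}
    (hC : LinearMap.range C.mulVecLin ≤ krylov A B k) :
    LinearMap.range (A * C + C * Aᵀ + B * Bᵀ).mulVecLin ≤ krylov A B (k + 1) := by
  rintro _ ⟨x, rfl⟩
  simp only [mulVecLin_apply, add_mulVec, ← mulVec_mulVec]
  refine add_mem (add_mem ?_ ?_) ?_
  · exact map_mulVecLin_krylov_le A B k (mem_map_of_mem (hC ⟨x, rfl⟩))
  · exact krylov_mono A B k.le_succ (hC ⟨_, rfl⟩)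
  · refine krylov_mono A B (Nat.le_add_left 1 k) ?_
    rw [krylov_one, ← col, ← range_mulVecLin]
    exact ⟨_, rfl⟩

end CommRing

theorem finrank_krylov_succ_le [Fintype κ] (A : Matrix ι ι K) (B : Matrix ι κ K) (k : ℕ) :
    Module.finrank K (krylov A B (k + 1)) ≤ Module.finrank K (krylov A B k) + Fintype.card κ := by
  rw [krylov_succ]
  exact (finrank_add_le_finrank_add_finrank _ _).trans
    (Nat.add_le_add_left (finrank_range_le_card (R := K) _) _)

end Matrix

theorem rails_search_space_eq_krylov_general
    {n m : ℕ} (A : Matrix (Fin n) (Fin n) ℝ) (B : Matrix (Fin n) (Fin m) ℝ)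
    (W : ℕ → Submodule ℝ (Fin n → ℝ)) (C : ℕ → Matrix (Fin n) (Fin n) ℝ)
    (hW1 : W 1 = Submodule.span ℝ (Set.range Bᵀ))
    (hrange : ∀ k, LinearMap.range (Matrix.mulVecLin (C k)) ≤ W k)
    (hexp : ∀ k, ∃ q : Fin m → (Fin n → ℝ),
      (∀ i, ∃ lam : ℝ, lam ≠ 0 ∧
        (A * C k + C k * Aᵀ + B * Bᵀ).mulVec (q i) = lam • q i) ∧
      W (k + 1) = W k ⊔ Submodule.span ℝ (Set.range q))
    (hdim : ∀ k, Module.finrank ℝ (W (k + 1)) = Module.finrank ℝ (W k) + m) :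
    ∀ k, 1 ≤ k →
      W k = Submodule.span ℝ (⋃ i ∈ Set.Iio k, Set.range (A ^ i * B)ᵀ) := by
  change ∀ k, 1 ≤ k → W k = krylov A B k
  intro k hk
  induction k, hk using Nat.le_induction with
  | base => rw [hW1, krylov_one]
  | succ k _ ih =>
    obtain ⟨q, hq, hWsucc⟩ := hexp k
    have hq_le : span ℝ (Set.range q) ≤ krylov A B (k + 1) := by
      rw [span_le]
      rintro _ ⟨i, rfl⟩
      obtain ⟨c, hc, hqi⟩ := hq i
      exact range_lyapunovResidual_le_krylov_succ A B (ih ▸ hrange k)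
        (mem_range_mulVecLin_of_mulVec_eq_smul hc hqi)
    have hle : W (k + 1) ≤ krylov A B (k + 1) :=
      hWsucc ▸ sup_le (ih ▸ krylov_mono A B k.le_succ) hq_le
    refine eq_of_le_of_finrank_le hle ?_
    rw [hdim k, ih]
    simpa only [Fintype.card_fin] using finrank_krylov_succ_le A B k

/-- Remark 2.1 of the paper: if the columns of `B` are linearly independent and at every
RAILS iteration the search space `W k` is expanded by `m` eigenvectors (with nonzero
eigenvalues) of the residual `R k = A * C̃ k + C̃ k * Aᵀ + B * Bᵀ` in such a way that the
dimension increases by exactly `m`, then `W k = 𝒦_k(A, B)` for every `k ≥ 1`. -/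
theorem rails_search_space_eq_krylov
    {n m : ℕ} (A : Matrix (Fin n) (Fin n) ℝ) (B : Matrix (Fin n) (Fin m) ℝ)
    (hB : LinearIndependent ℝ Bᵀ)
    (W : ℕ → Submodule ℝ (Fin n → ℝ)) (C : ℕ → Matrix (Fin n) (Fin n) ℝ)
    (hW1 : W 1 = Submodule.span ℝ (Set.range Bᵀ))
    (hrange : ∀ k, LinearMap.range (Matrix.mulVecLin (C k)) ≤ W k)
    (hexp : ∀ k, ∃ q : Fin m → (Fin n → ℝ),
      (∀ i, ∃ lam : ℝ, lam ≠ 0 ∧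
        (A * C k + C k * Aᵀ + B * Bᵀ).mulVec (q i) = lam • q i) ∧
      W (k + 1) = W k ⊔ Submodule.span ℝ (Set.range q))
    (hdim : ∀ k, Module.finrank ℝ (W (k + 1)) = Module.finrank ℝ (W k) + m) :
    ∀ k, 1 ≤ k →
      W k = Submodule.span ℝ (⋃ i ∈ Set.Iio k, Set.range (A ^ i * B)ᵀ) :=
  rails_search_space_eq_krylov_general A B W C hW1 hrange hexp hdim
end

section
/- Let A ∈ ℝ^{n×n}, B ∈ ℝ^{n×m}, and let V ∈ ℝ^{n×k} have orthonormal columns (Vᵀ V = I_k). Set Ã = Vᵀ A V and B̃ = Vᵀ B, and suppose T ∈ ℝ^{k×k} solves the projected Lyapunov equation Ã T + T Ãᵀ + B̃ B̃ᵀ = 0. Let R = A (V T Vᵀ) + (V T Vᵀ) Aᵀ + B Bᵀ be the residual. If q is a nonzero vector with R q = λ q and q lies in the column span of V, then λ = 0. (This is the core computation in the proof of Proposition 2.3 of the paper, showing λ q = V(Ã T + T Ãᵀ + B̃ B̃ᵀ)Vᵀ q = 0.) -/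
/-!
Compressing the residual `R` of `V T Vᵀ` onto the range of `V` gives exactly the residual of `T`
for the projected equation, which vanishes (the Galerkin condition `Vᵀ R V = 0`). For an
eigenvector `q = V c` of `R` this yields `λ c = Vᵀ R V c = 0` with `c ≠ 0`.
-/

open Matrix

namespace Matrix

variable {R ι κ μ : Type*} [Fintype ι] [Fintype κ] [Fintype μ]

def lyapunovResidual [CommSemiring R] (A : Matrix ι ι R) (B : Matrix ι μ R) (X : Matrix ι ι R) :
    Matrix ι ι R :=
  A * X + X * Aᵀ + B * Bᵀ

theorem transpose_mul_lyapunovResidual_mul [CommSemiring R] [DecidableEq κ]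
    {A : Matrix ι ι R} {B : Matrix ι μ R} {V : Matrix ι κ R} (hV : Vᵀ * V = 1)
    (T : Matrix κ κ R) :
    Vᵀ * lyapunovResidual A B (V * T * Vᵀ) * V = lyapunovResidual (Vᵀ * A * V) (Vᵀ * B) T := by
  have hVTV : ∀ X : Matrix κ κ R, Vᵀ * (V * X) = X := fun X => by
    rw [← Matrix.mul_assoc, hV, Matrix.one_mul]
  simp only [lyapunovResidual, Matrix.mul_add, Matrix.add_mul, transpose_mul, transpose_transpose,
    Matrix.mul_assoc, hVTV, hV, Matrix.mul_one]

theorem eq_zero_of_mulVec_eq_smul_of_mul_mul_eq_zero [Field R] [DecidableEq κ]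
    {M : Matrix ι ι R} {V : Matrix ι κ R} {W : Matrix κ ι R} (hWV : W * V = 1)
    (hM : W * M * V = 0) {c : κ → R} (hc : V *ᵥ c ≠ 0) {lam : R}
    (heig : M *ᵥ (V *ᵥ c) = lam • (V *ᵥ c)) : lam = 0 := by
  have hlam : lam • c = 0 :=
    calc lam • c = W *ᵥ (lam • (V *ᵥ c)) := by
          rw [mulVec_smul, mulVec_mulVec, hWV, one_mulVec]
      _ = (W * M * V) *ᵥ c := by rw [← heig, mulVec_mulVec, mulVec_mulVec]
      _ = 0 := by rw [hM, zero_mulVec]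
  have hc0 : c ≠ 0 := by
    rintro rfl
    exact hc (mulVec_zero V)
  exact (smul_eq_zero.mp hlam).resolve_right hc0

end Matrix

/-- The core computation in the proof of Proposition 2.3 of the paper: if `V` has
orthonormal columns, `T` solves the projected Lyapunov equation
`Ã T + T Ãᵀ + B̃ B̃ᵀ = 0` with `Ã = Vᵀ A V`, `B̃ = Vᵀ B`, and `q` is a nonzero
eigenvector of the residual `R = A V T Vᵀ + V T Vᵀ Aᵀ + B Bᵀ` that lies in the column
span of `V`, then its eigenvalue is zero. -/
theorem residual_eigenvalue_in_span_eq_zero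
    {n m k : ℕ} (A : Matrix (Fin n) (Fin n) ℝ) (B : Matrix (Fin n) (Fin m) ℝ)
    (V : Matrix (Fin n) (Fin k) ℝ) (hV : Vᵀ * V = 1)
    (T : Matrix (Fin k) (Fin k) ℝ)
    (hT : (Vᵀ * A * V) * T + T * (Vᵀ * A * V)ᵀ + (Vᵀ * B) * (Vᵀ * B)ᵀ = 0)
    (q : Fin n → ℝ) (hq : q ≠ 0) (lam : ℝ)
    (heig : (A * (V * T * Vᵀ) + (V * T * Vᵀ) * Aᵀ + B * Bᵀ).mulVec q = lam • q)
    (hspan : q ∈ Submodule.span ℝ (Set.range Vᵀ)) :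
    lam = 0 := by
  obtain ⟨c, rfl⟩ : ∃ c, V *ᵥ c = q := by
    have hcol : q ∈ LinearMap.range V.mulVecLin := by
      rw [range_mulVecLin]
      exact hspan
    simpa using hcol
  have hGalerkin : Vᵀ * lyapunovResidual A B (V * T * Vᵀ) * V = 0 :=
    (transpose_mul_lyapunovResidual_mul hV T).trans hT
  exact eq_zero_of_mulVec_eq_smul_of_mul_mul_eq_zero hV hGalerkin hq heig
end
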